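/- arXiv:1104.2579 — 5 statements merged into one kernel-verified Lean document; each statement's English description precedes it below -/
import Mathlib

section
/- Let τ be an idempotent endomorphism of an algebra A. If x, y ∈ A satisfy τ(x) = τ(y), then the congruence on A generated by the pair (x,y) equals the congruence on the state-morphism algebra (A,τ) generated by (x,y); in particular the congruence on A generated by (x,y) is compatible with τ. -/
/-! Since `τ x = τ y`, the pair `(x, y)` lies in the kernel congruence of `τ`, hence so does
`Θ(x, y)`; so `τ` sends `Θ(x, y)`-related elements to equal ones, and compatibility is trivial. -/

namespace Con

theorem conGen_pair_le {M : Type*} [Mul M] {c : Con M} {x y : M} (h : c x y) :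
    conGen (fun a b => a = x ∧ b = y) ≤ c :=
  conGen_le.2 fun _ _ ⟨ha, hb⟩ => ha ▸ hb ▸ h

theorem conGen_pair_le_ker {M N F : Type*} [Mul M] [Mul N] [FunLike F M N] [MulHomClass F M N]
    (f : F) {x y : M} (h : f x = f y) : conGen (fun a b => a = x ∧ b = y) ≤ ker f :=
  conGen_pair_le ((ker_rel f).2 h)

end Con

theorem stmt3_general {M : Type*} [Monoid M] (τ : M →* M)
    (x y : M) (hxy : τ x = τ y) :
    (∀ a b, conGen (fun a b => a = x ∧ b = y) a b →
      conGen (fun a b => a = x ∧ b = y) (τ a) (τ b)) ∧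
    (∀ d : Con M, (∀ a b, d a b → d (τ a) (τ b)) → d x y →
      conGen (fun a b => a = x ∧ b = y) ≤ d) := by
  refine ⟨fun a b hab => ?_, fun d _ hd => Con.conGen_pair_le hd⟩
  have hτab : τ a = τ b := Con.conGen_pair_le_ker τ hxy hab
  rw [hτab]
  exact (conGen _).refl _

/-- If τ x = τ y, then the congruence generated by (x,y) is compatible with τ and
is the least τ-compatible congruence containing (x,y), i.e. Θ(x,y) = Θ_τ(x,y). -/
theorem stmt3 {M : Type*} [Monoid M] (τ : M →* M) (hτ : ∀ x, τ (τ x) = τ x)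
    (x y : M) (hxy : τ x = τ y) :
    (∀ a b, conGen (fun a b => a = x ∧ b = y) a b →
      conGen (fun a b => a = x ∧ b = y) (τ a) (τ b)) ∧
    (∀ d : Con M, (∀ a b, d a b → d (τ a) (τ b)) → d x y →
      conGen (fun a b => a = x ∧ b = y) ≤ d) :=
  stmt3_general τ x y hxy
end

section
/- Let τ be an idempotent endomorphism of an algebra A. If x and y both lie in the image τ(A), then the congruence on A generated by (x,y) is compatible with τ, and hence equals the smallest τ-compatible congruence containing (x,y). -/
/-!
A multiplicative map sending every generating pair of `conGen r` into `conGen s` maps all of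
`conGen r` into `conGen s`, since the pullback of `conGen s` is a congruence containing `r`.
An idempotent `τ` fixes its image pointwise, so it fixes the generating pair `(x, y)`.
-/

theorem Con.conGen_apply_of_rel {M N F : Type*} [Mul M] [Mul N] [FunLike F M N]
    [MulHomClass F M N] (f : F) {r : M → M → Prop} {s : N → N → Prop}
    (h : ∀ a b, r a b → conGen s (f a) (f b)) {a b : M} (hab : conGen r a b) :
    conGen s (f a) (f b) :=
  (Con.conGen_le (c := (conGen s).comap f (map_mul f))).2 h hab

theorem MonoidHom.apply_eq_self_of_mem_mrange {M : Type*} [MulOneClass M] {τ : M →* M}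
    (hτ : ∀ x, τ (τ x) = τ x) {x : M} (hx : x ∈ MonoidHom.mrange τ) : τ x = x := by
  obtain ⟨u, rfl⟩ := hx
  exact hτ u

/-- If x, y lie in the image τ(A), then the congruence generated by (x,y) is
compatible with τ, hence equals the least τ-compatible congruence containing (x,y). -/
theorem stmt4 {M : Type*} [Monoid M] (τ : M →* M) (hτ : ∀ x, τ (τ x) = τ x)
    (x y : M) (hx : x ∈ (MonoidHom.mrange τ)) (hy : y ∈ (MonoidHom.mrange τ)) :
    (∀ a b, conGen (fun a b => a = x ∧ b = y) a b →
      conGen (fun a b => a = x ∧ b = y) (τ a) (τ b)) ∧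
    (∀ d : Con M, (∀ a b, d a b → d (τ a) (τ b)) → d x y →
      conGen (fun a b => a = x ∧ b = y) ≤ d) := by
  refine ⟨fun a b => Con.conGen_apply_of_rel τ ?_, fun d _ hxy => ?_⟩
  · rintro a b ⟨rfl, rfl⟩
    exact ConGen.Rel.of _ _ ⟨τ.apply_eq_self_of_mem_mrange hτ hx,
      τ.apply_eq_self_of_mem_mrange hτ hy⟩
  · exact Con.conGen_le.2 fun a b ⟨ha, hb⟩ => ha ▸ hb ▸ hxy
end

section
/- Let (M,τ) be a state BL-algebra with τ faithful (Ker(τ) = {1}, where Ker(τ) = {a : τ(a) = 1}). Then (M,τ) is subdirectly irreducible as a state BL-algebra if and only if the image τ(M) is subdirectly irreducible as a BL-algebra. -/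
/-!
For a τ-filter `G` of `M` and a filter `H` of `τ(M)` we have `upperClosure H ⊆ G ↔ H ⊆ G ∩ τ(M)`
and `upperClosure H ∩ τ(M) = H`; `upperClosure H` is again a τ-filter because τ is monotone and
fixes `τ(M)`. Faithfulness makes `G ↦ G ∩ τ(M)` reflect nontriviality: if `x ≠ 1` lies in a
τ-filter, so does `τ x ≠ 1`. Hence a least nontrivial object on either side is carried to a least
nontrivial object on the other.
-/

/-- A BL-algebra: a bounded prelinear divisible integral commutative residuated
lattice. The monoid unit `1` coincides with the top element. -/
class BLAlgebra (M : Type*) extends Lattice M, CommMonoid M, BoundedOrder M where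
  residuum : M → M → M
  one_eq_top : (1 : M) = ⊤
  adjoint : ∀ a b c : M, c ≤ residuum a b ↔ a * c ≤ b
  div : ∀ a b : M, a ⊓ b = a * residuum a b
  prelin : ∀ a b : M, residuum a b ⊔ residuum b a = ⊤

/-- A state-operator on a BL-algebra. -/
def IsStateOperator {M : Type*} [BLAlgebra M] (τ : M → M) : Prop :=
  τ ⊥ = ⊥ ∧
  (∀ x y, τ (BLAlgebra.residuum x y) = BLAlgebra.residuum (τ x) (τ (x ⊓ y))) ∧
  (∀ x y, τ (x * y) = τ x * τ (BLAlgebra.residuum x (x * y))) ∧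
  (∀ x y, τ (τ x * τ y) = τ x * τ y) ∧
  (∀ x y, τ (BLAlgebra.residuum (τ x) (τ y)) = BLAlgebra.residuum (τ x) (τ y))

/-- `F` is a (BL-)filter of the subalgebra with underlying set `S`. -/
def IsFilterOn {M : Type*} [BLAlgebra M] (S F : Set M) : Prop :=
  F ⊆ S ∧ (1 : M) ∈ F ∧ (∀ x ∈ F, ∀ y ∈ F, x * y ∈ F) ∧
    ∀ x ∈ F, ∀ y ∈ S, x ≤ y → y ∈ F

namespace BLAlgebra

variable {M : Type*} [BLAlgebra M]

theorem le_one (a : M) : a ≤ 1 := one_eq_top (M := M) ▸ le_top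

theorem residuum_self (a : M) : residuum a a = 1 :=
  le_antisymm (le_one _) ((adjoint a a 1).mpr (mul_one a).le)

instance : IsOrderedMonoid M where
  mul_le_mul_left a b hab c := by
    rw [mul_comm a, mul_comm b]
    exact (adjoint c (c * b) a).mp (hab.trans ((adjoint c (c * b) b).mpr le_rfl))

end BLAlgebra

namespace IsStateOperator

open BLAlgebra

variable {M : Type*} [BLAlgebra M] {τ : M → M}

theorem map_one (hτ : IsStateOperator τ) : τ 1 = 1 := by
  have h := hτ.2.1 1 1
  rwa [residuum_self, inf_idem, residuum_self] at h

theorem map_map (hτ : IsStateOperator τ) (a : M) : τ (τ a) = τ a := by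
  simpa only [hτ.map_one, mul_one] using hτ.2.2.2.1 a 1

theorem map_of_mem_range (hτ : IsStateOperator τ) {x : M} (hx : x ∈ Set.range τ) : τ x = x := by
  obtain ⟨a, rfl⟩ := hx
  exact hτ.map_map a

theorem monotone (hτ : IsStateOperator τ) : Monotone τ := by
  intro x y hxy
  have hx : y * residuum y x = x := by rw [← div, inf_eq_right.mpr hxy]
  calc τ x = τ y * τ (residuum y x) := by simpa only [hx] using hτ.2.2.1 y (residuum y x)
    _ ≤ τ y * 1 := mul_le_mul_right (le_one _) _
    _ = τ y := mul_one _

theorem mul_mem_range (hτ : IsStateOperator τ) {x y : M} (hx : x ∈ Set.range τ)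
    (hy : y ∈ Set.range τ) : x * y ∈ Set.range τ :=
  ⟨x * y, by
    rw [← hτ.map_of_mem_range hx, ← hτ.map_of_mem_range hy, hτ.2.2.2.1,
      hτ.map_of_mem_range hx, hτ.map_of_mem_range hy]⟩

end IsStateOperator

namespace IsFilterOn

variable {M : Type*} [BLAlgebra M] {S G : Set M}

theorem ne_singleton_one_iff (hG : IsFilterOn S G) : G ≠ {1} ↔ ∃ x ∈ G, x ≠ 1 := by
  simp [Set.eq_singleton_iff_unique_mem, hG.2.1]

theorem upperClosure_inter_subset (hG : IsFilterOn S G) : ↑(upperClosure G) ∩ S ⊆ G := by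
  rintro x ⟨⟨g, hg, hgx⟩, hx⟩
  exact hG.2.2.2 g hg x hx hgx

theorem image_upperClosure_subset {τ : M → M} (hτ : IsStateOperator τ)
    (hG : IsFilterOn (Set.range τ) G) : τ '' ↑(upperClosure G) ⊆ ↑(upperClosure G) := by
  rintro _ ⟨x, ⟨g, hg, hgx⟩, rfl⟩
  exact ⟨g, hg, (hτ.map_of_mem_range (hG.1 hg)).symm.le.trans (hτ.monotone hgx)⟩

theorem inter_range {τ : M → M} (hτ : IsStateOperator τ) (hG : IsFilterOn Set.univ G) :
    IsFilterOn (Set.range τ) (G ∩ Set.range τ) := by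
  obtain ⟨-, hG1, hGmul, hGup⟩ := hG
  refine ⟨Set.inter_subset_right, ⟨hG1, 1, hτ.map_one⟩, ?_, ?_⟩
  · rintro x ⟨hxG, hxS⟩ y ⟨hyG, hyS⟩
    exact ⟨hGmul x hxG y hyG, hτ.mul_mem_range hxS hyS⟩
  · rintro x ⟨hxG, -⟩ y hyS hxy
    exact ⟨hGup x hxG y trivial hxy, hyS⟩

theorem inter_range_ne_singleton_one {τ : M → M} (hτ : IsStateOperator τ)
    (hfaith : ∀ a, τ a = 1 → a = 1) (hG : IsFilterOn Set.univ G) (hτG : τ '' G ⊆ G)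
    (hG1 : G ≠ {1}) : G ∩ Set.range τ ≠ {1} := by
  obtain ⟨x, hx, hx1⟩ := hG.ne_singleton_one_iff.mp hG1
  exact (hG.inter_range hτ).ne_singleton_one_iff.mpr
    ⟨τ x, ⟨hτG ⟨x, hx, rfl⟩, x, rfl⟩, mt (hfaith x) hx1⟩

theorem upperClosure (hG : IsFilterOn S G) :
    IsFilterOn Set.univ (_root_.upperClosure G : Set M) := by
  obtain ⟨-, hG1, hGmul, -⟩ := hG
  refine ⟨Set.subset_univ _, subset_upperClosure hG1, ?_,
    fun x hx y _ hxy => (_root_.upperClosure G).upper hxy hx⟩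
  rintro x ⟨g, hg, hgx⟩ y ⟨h, hh, hhy⟩
  exact ⟨g * h, hGmul g hg h hh, mul_le_mul' hgx hhy⟩

theorem upperClosure_ne_singleton_one (hG : IsFilterOn S G) (hG1 : G ≠ {1}) :
    (_root_.upperClosure G : Set M) ≠ {1} := by
  obtain ⟨x, hx, hx1⟩ := hG.ne_singleton_one_iff.mp hG1
  exact hG.upperClosure.ne_singleton_one_iff.mpr ⟨x, subset_upperClosure hx, hx1⟩

end IsFilterOn

/-- For a state BL-algebra (M,τ) with τ faithful, (M,τ) is subdirectly irreducible
(has a least nontrivial τ-filter) iff the image τ(M) is a subdirectly irreducible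
BL-algebra (has a least nontrivial filter). -/
theorem stmt13 {M : Type*} [BLAlgebra M] (τ : M → M) (hτ : IsStateOperator τ)
    (hfaith : ∀ a, τ a = 1 → a = 1) :
    (∃ F : Set M, IsFilterOn Set.univ F ∧ τ '' F ⊆ F ∧ F ≠ {1} ∧
      ∀ G : Set M, IsFilterOn Set.univ G → τ '' G ⊆ G → G ≠ {1} → F ⊆ G) ↔
    (∃ F : Set M, IsFilterOn (Set.range τ) F ∧ F ≠ {1} ∧
      ∀ G : Set M, IsFilterOn (Set.range τ) G → G ≠ {1} → F ⊆ G) := by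
  constructor
  · rintro ⟨F, hF, hτF, hF1, hmin⟩
    refine ⟨F ∩ Set.range τ, hF.inter_range hτ, hF.inter_range_ne_singleton_one hτ hfaith hτF hF1,
      fun G hG hG1 => ?_⟩
    have hFG := hmin _ hG.upperClosure (hG.image_upperClosure_subset hτ)
      (hG.upperClosure_ne_singleton_one hG1)
    exact (Set.inter_subset_inter_left _ hFG).trans hG.upperClosure_inter_subset
  · rintro ⟨F, hF, hF1, hmin⟩
    refine ⟨_, hF.upperClosure, hF.image_upperClosure_subset hτ,
      hF.upperClosure_ne_singleton_one hF1, fun G hG hτG hG1 => ?_⟩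
    have hFG := hmin _ (hG.inter_range hτ) (hG.inter_range_ne_singleton_one hτ hfaith hτG hG1)
    rintro x ⟨f, hf, hfx⟩
    exact hG.upperClosure_inter_subset ⟨⟨f, (hFG hf).1, hfx⟩, trivial⟩
end

section
/- In a BL-algebra M, for any elements x, y and any natural number n, (x ∨ y)^n = x^n ∨ y^n, where powers are taken with respect to the monoid operation ⊙. -/
/-!
Prelinearity gives `(x → y) ⊔ (y → x) = 1`, and joins equal to `1` survive taking powers, so
`(x → y)^n ⊔ (y → x)^n = 1`. Multiplying `(x ⊔ y)^n` by this and distributing,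
the two terms are `((x ⊔ y) ⊙ (x → y))^n ≤ y^n` and `((x ⊔ y) ⊙ (y → x))^n ≤ x^n`.
-/

namespace BLAlgebra

variable {M : Type*} [BLAlgebra M]

theorem gc_mul_residuum (a : M) : GaloisConnection (a * ·) (residuum a) :=
  fun _ _ => (adjoint a _ _).symm

instance inst_s15 : IsOrderedMonoid M where
  mul_le_mul_left a b h c := by
    rw [mul_comm a, mul_comm b]
    exact (gc_mul_residuum c).monotone_l h

theorem mul_sup (a b c : M) : a * (b ⊔ c) = a * b ⊔ a * c :=
  (gc_mul_residuum a).l_sup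

theorem sup_mul (a b c : M) : (a ⊔ b) * c = a * c ⊔ b * c := by
  simp only [mul_comm _ c, mul_sup]

theorem sup_mul_residuum_le (x y : M) : (x ⊔ y) * residuum x y ≤ y := by
  rw [sup_mul]
  exact sup_le ((gc_mul_residuum x).l_u_le y) (mul_le_of_le_one_right' (le_one _))

theorem sup_pow_eq_one {a b : M} (h : a ⊔ b = 1) (n : ℕ) : a ⊔ b ^ n = 1 := by
  induction n with
  | zero => rw [pow_zero]; exact sup_eq_right.mpr (le_one a)
  | succ n ih =>
    refine le_antisymm (sup_le (le_one a) (le_one _)) ?_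
    calc (1 : M) = (a ⊔ b ^ n) * a ⊔ (a * b ⊔ b ^ n * b) := by
          rw [← sup_mul, ← mul_sup, ih, h, one_mul]
      _ ≤ a ⊔ (a ⊔ b ^ (n + 1)) := by
        gcongr
        · exact mul_le_of_le_one_left' (le_one _)
        · exact mul_le_of_le_one_right' (le_one b)
        · rw [pow_succ]
      _ = a ⊔ b ^ (n + 1) := by rw [← sup_assoc, sup_idem]

theorem pow_sup_pow_eq_one {a b : M} (h : a ⊔ b = 1) (m n : ℕ) : a ^ m ⊔ b ^ n = 1 := by
  have h' : b ^ n ⊔ a = 1 := by rw [sup_comm, sup_pow_eq_one h n]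
  rw [sup_comm, sup_pow_eq_one h' m]

theorem residuum_sup_residuum (a b : M) : residuum a b ⊔ residuum b a = 1 := by
  rw [prelin, one_eq_top]

end BLAlgebra

/-- In a BL-algebra, (x ⊔ y)^n = x^n ⊔ y^n. -/
theorem stmt15 {M : Type*} [BLAlgebra M] (x y : M) (n : ℕ) :
    (x ⊔ y) ^ n = x ^ n ⊔ y ^ n := by
  apply le_antisymm
  · set u := BLAlgebra.residuum x y
    set v := BLAlgebra.residuum y x
    calc (x ⊔ y) ^ n = (x ⊔ y) ^ n * (u ^ n ⊔ v ^ n) := by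
          rw [BLAlgebra.pow_sup_pow_eq_one (BLAlgebra.residuum_sup_residuum x y), mul_one]
      _ = ((x ⊔ y) * u) ^ n ⊔ ((y ⊔ x) * v) ^ n := by
          rw [BLAlgebra.mul_sup, mul_pow, mul_pow, sup_comm y x]
      _ ≤ y ^ n ⊔ x ^ n := by
          gcongr
          · exact BLAlgebra.sup_mul_residuum_le x y
          · exact BLAlgebra.sup_mul_residuum_le y x
      _ = x ^ n ⊔ y ^ n := sup_comm _ _
  · exact sup_le (pow_le_pow_left' le_sup_left n) (pow_le_pow_left' le_sup_right n)
end

section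
/- Let V be a variety (class closed under homomorphic images, subalgebras, products) of algebras of type F with the congruence extension property, and let τ be an idempotent endomorphism of A ∈ V. If B is a subalgebra of A closed under τ and φ is a τ-compatible congruence on B, then the congruence Θ(φ) on A generated by φ is itself τ-compatible, and Θ(φ) ∩ (B × B) = φ; hence the variety of state-morphism algebras over V also has the congruence extension property. -/
/-!
A congruence θ on A extending φ contains Θ(φ), and Θ(φ) contains φ, so Θ(φ) restricts to φ on B.
Since τ is multiplicative, the pullback of Θ(φ) along τ is a congruence; it contains φ because φ is
τ-compatible, hence it contains Θ(φ), which is exactly τ-compatibility of Θ(φ).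
-/

namespace Con

theorem conGen_rel_map {M N F : Type*} [Mul M] [Mul N] [FunLike F M N] [MulHomClass F M N]
    (f : F) {r : M → M → Prop} {c : Con N} (h : ∀ a b, r a b → c (f a) (f b)) {a b : M}
    (hab : conGen r a b) : c (f a) (f b) :=
  (conGen_le (c := c.comap f (map_mul f)) |>.2 h) hab

variable {M : Type*} [MulOneClass M] {B : Submonoid M}

def liftRel (φ : Con B) (a b : M) : Prop :=
  ∃ (ha : a ∈ B) (hb : b ∈ B), φ ⟨a, ha⟩ ⟨b, hb⟩

theorem conGen_liftRel_restrict_iff {φ : Con B} (θ : Con M) (hθ : ∀ x y : B, θ x y ↔ φ x y)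
    (x y : B) : conGen φ.liftRel x y ↔ φ x y := by
  refine ⟨fun h => (hθ x y).mp ?_, fun h => ConGen.Rel.of _ _ ⟨x.2, y.2, h⟩⟩
  refine conGen_le.2 (fun a b ⟨ha, hb, hab⟩ => ?_) h
  exact (hθ ⟨a, ha⟩ ⟨b, hb⟩).mpr hab

theorem conGen_liftRel_map_of_compatible (τ : M →* M) (hB : ∀ x ∈ B, τ x ∈ B) {φ : Con B}
    (hφ : ∀ x y : B, φ x y → φ ⟨τ x, hB x x.2⟩ ⟨τ y, hB y y.2⟩) {a b : M}
    (hab : conGen φ.liftRel a b) : conGen φ.liftRel (τ a) (τ b) :=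
  conGen_rel_map τ (fun x y ⟨hx, hy, hxy⟩ =>
    ConGen.Rel.of _ _ ⟨hB x hx, hB y hy, hφ ⟨x, hx⟩ ⟨y, hy⟩ hxy⟩) hab

end Con

theorem stmt19_general {M : Type*} [Monoid M]
    (hCEP : ∀ (B : Submonoid M) (φ : Con B), ∃ θ : Con M, ∀ x y : B, θ (x : M) y ↔ φ x y)
    (τ : M →* M)
    (B : Submonoid M) (hB : ∀ x ∈ B, τ x ∈ B)
    (φ : Con B)
    (hφ : ∀ x y : B, φ x y → φ ⟨τ x, hB x x.2⟩ ⟨τ y, hB y y.2⟩) :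
    (∀ a b, conGen (fun a b => ∃ (ha : a ∈ B) (hb : b ∈ B), φ ⟨a, ha⟩ ⟨b, hb⟩) a b →
      conGen (fun a b => ∃ (ha : a ∈ B) (hb : b ∈ B), φ ⟨a, ha⟩ ⟨b, hb⟩) (τ a) (τ b)) ∧
    (∀ x y : B, conGen (fun a b => ∃ (ha : a ∈ B) (hb : b ∈ B), φ ⟨a, ha⟩ ⟨b, hb⟩) (x : M) y ↔ φ x y) ∧
    (∃ θ : Con M, (∀ x y, θ x y → θ (τ x) (τ y)) ∧ ∀ x y : B, θ (x : M) y ↔ φ x y) := by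
  obtain ⟨θ, hθ⟩ := hCEP B φ
  have hcompat : ∀ a b, conGen φ.liftRel a b → conGen φ.liftRel (τ a) (τ b) :=
    fun _ _ => Con.conGen_liftRel_map_of_compatible τ hB hφ
  have hrestrict := Con.conGen_liftRel_restrict_iff θ hθ
  exact ⟨hcompat, hrestrict, conGen φ.liftRel, hcompat, hrestrict⟩

/-- If A has the congruence extension property, τ is an idempotent endomorphism of A,
B is a τ-closed subalgebra, and φ is a τ-compatible congruence on B, then the
congruence Θ(φ) on A generated by φ is τ-compatible and restricts to φ on B;
hence the congruence extension property passes to state-morphism algebras. -/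
theorem stmt19 {M : Type*} [Monoid M]
    (hCEP : ∀ (B : Submonoid M) (φ : Con B), ∃ θ : Con M, ∀ x y : B, θ (x : M) y ↔ φ x y)
    (τ : M →* M) (hτ : ∀ x, τ (τ x) = τ x)
    (B : Submonoid M) (hB : ∀ x ∈ B, τ x ∈ B)
    (φ : Con B)
    (hφ : ∀ x y : B, φ x y → φ ⟨τ x, hB x x.2⟩ ⟨τ y, hB y y.2⟩) :
    (∀ a b, conGen (fun a b => ∃ (ha : a ∈ B) (hb : b ∈ B), φ ⟨a, ha⟩ ⟨b, hb⟩) a b →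
      conGen (fun a b => ∃ (ha : a ∈ B) (hb : b ∈ B), φ ⟨a, ha⟩ ⟨b, hb⟩) (τ a) (τ b)) ∧
    (∀ x y : B, conGen (fun a b => ∃ (ha : a ∈ B) (hb : b ∈ B), φ ⟨a, ha⟩ ⟨b, hb⟩) (x : M) y ↔ φ x y) ∧
    (∃ θ : Con M, (∀ x y, θ x y → θ (τ x) (τ y)) ∧ ∀ x y : B, θ (x : M) y ↔ φ x y) :=
  stmt19_general hCEP τ B hB φ hφ
end
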